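/- Bound on the modified inlier-noise vector: let Q ∈ ℝ^{n×m} have orthonormal columns (QᵀQ = Iₘ), let δ ∈ [0,1] satisfy the principal-angle bound for sparsity level s with δ² < 1/2, let η ∈ ℝⁿ with ‖η‖₂ ≤ ε₀, and let S_k ⊆ {1,…,n} be nonempty with |S_k| ≤ s, so that M_k = I_k − I_{S_k}ᵀQQᵀI_{S_k} is invertible. Then the vector η_k = F_{J∖S_k}(η) + I_{S_k} M_k⁻¹ I_{S_k}ᵀ Q Qᵀ F_{J∖S_k}(η), where J = {1,…,n}, satisfies ‖η_k‖₂² ≤ 3 ε₀². -/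

import Mathlib

/-!
Write `f = F_{J∖S}(η)`, `P = Qᵀ I_S` and `u = I_Sᵀ Q Qᵀ f`, so that `M = 1 − PᵀP` and
`η_k = f + I_S M⁻¹ u`. The principal-angle bound, applied to the `s`-sparse vectors `I_S x`, gives
`‖P x‖ ≤ δ ‖x‖` and `‖u‖ ≤ δ ‖Qᵀ f‖ ≤ δ ‖f‖`. Hence `xᵀ M x ≥ (1 − δ²) ‖x‖²`, so `M` is positive
definite and `‖M⁻¹ u‖ ≤ ‖u‖ / (1 − δ²) ≤ 2 δ ‖f‖`. Since `f` and `I_S M⁻¹ u` have disjoint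
supports, `‖η_k‖² = ‖f‖² + ‖M⁻¹ u‖² ≤ (1 + 4 δ²) ‖f‖² ≤ 3 ε₀²`.
-/

open Matrix

/-- Euclidean (ℓ₂) norm of a finitely-indexed real vector. -/
noncomputable def norm2 {ι : Type*} [Fintype ι] (v : ι → ℝ) : ℝ :=
  Real.sqrt (∑ i, v i ^ 2)

/-- A vector of `ℝⁿ` is `s`-sparse if it has at most `s` nonzero entries. -/
def Sparse {n : ℕ} (s : ℕ) (v : Fin n → ℝ) : Prop :=
  ∃ T : Finset (Fin n), T.card ≤ s ∧ ∀ i ∉ T, v i = 0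

/-- `δ` satisfies the principal-angle bound for `Q` at sparsity level `s`:
`|⟨Qw, v⟩| ≤ δ ‖Qw‖₂ ‖v‖₂` for every `w` and every `s`-sparse `v`. -/
def PABound {n m : ℕ} (Q : Matrix (Fin n) (Fin m) ℝ) (s : ℕ) (δ : ℝ) : Prop :=
  ∀ (w : Fin m → ℝ) (v : Fin n → ℝ), Sparse s v →
    |Q.mulVec w ⬝ᵥ v| ≤ δ * norm2 (Q.mulVec w) * norm2 v

/-- The `n × |S|` matrix `I_S` whose columns are the standard basis vectors `e_j`, `j ∈ S`. -/
def colSel {n : ℕ} (S : Finset (Fin n)) : Matrix (Fin n) {i // i ∈ S} ℝ :=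
  Matrix.of fun i j => if i = (j : Fin n) then 1 else 0

/-- `F_S(a) = I_S I_Sᵀ a`: the vector agreeing with `a` on `S` and zero elsewhere. -/
def restrictVec {n : ℕ} (S : Finset (Fin n)) (a : Fin n → ℝ) : Fin n → ℝ :=
  fun i => if i ∈ S then a i else 0

open Finset

lemma le_of_sq_le_mul {a c : ℝ} (hc : 0 ≤ c) (h : a ^ 2 ≤ c * a) : a ≤ c := by
  nlinarith

lemma isHermitian_one_sub_transpose_mul_self {ι κ : Type*} [Fintype κ] [DecidableEq ι]
    (P : Matrix κ ι ℝ) : (1 - Pᵀ * P).IsHermitian := by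
  simpa only [conjTranspose_eq_transpose_of_trivial] using
    isHermitian_one.sub (isHermitian_conjTranspose_mul_self P)

section norm2

variable {ι κ : Type*} [Fintype ι] [Fintype κ]

lemma norm2_nonneg (v : ι → ℝ) : 0 ≤ norm2 v := Real.sqrt_nonneg _

lemma sq_norm2 (v : ι → ℝ) : norm2 v ^ 2 = v ⬝ᵥ v := by
  rw [norm2, Real.sq_sqrt (sum_nonneg fun _ _ => sq_nonneg _)]
  simp only [dotProduct, sq]

lemma dotProduct_le_norm2_mul_norm2 (v w : ι → ℝ) : v ⬝ᵥ w ≤ norm2 v * norm2 w :=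
  Real.sum_mul_le_sqrt_mul_sqrt univ v w

lemma norm2_mulVec_of_transpose_mul_self [DecidableEq κ] {A : Matrix ι κ ℝ} (hA : Aᵀ * A = 1)
    (w : κ → ℝ) : norm2 (A *ᵥ w) = norm2 w := by
  refine (pow_left_inj₀ (norm2_nonneg _) (norm2_nonneg _) two_ne_zero).mp ?_
  rw [sq_norm2, sq_norm2, ← dotProduct_transpose_mulVec, dotProduct_comm, mulVec_mulVec, hA,
    one_mulVec]

lemma norm2_transpose_mulVec_le [DecidableEq κ] {A : Matrix ι κ ℝ} (hA : Aᵀ * A = 1)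
    (v : ι → ℝ) : norm2 (Aᵀ *ᵥ v) ≤ norm2 v := by
  refine le_of_sq_le_mul (norm2_nonneg v) ?_
  calc norm2 (Aᵀ *ᵥ v) ^ 2 = v ⬝ᵥ A *ᵥ (Aᵀ *ᵥ v) := by
        rw [sq_norm2, dotProduct_transpose_mulVec]
    _ ≤ norm2 v * norm2 (Aᵀ *ᵥ v) := by
        simpa only [norm2_mulVec_of_transpose_mul_self hA] using
          dotProduct_le_norm2_mul_norm2 v (A *ᵥ (Aᵀ *ᵥ v))

lemma dotProduct_one_sub_transpose_mul_self_mulVec [DecidableEq κ] (P : Matrix ι κ ℝ)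
    (x : κ → ℝ) : x ⬝ᵥ (1 - Pᵀ * P) *ᵥ x = norm2 x ^ 2 - norm2 (P *ᵥ x) ^ 2 := by
  rw [sub_mulVec, one_mulVec, dotProduct_sub, ← mulVec_mulVec, dotProduct_transpose_mulVec,
    sq_norm2, sq_norm2]

lemma mul_norm2_le_norm2_mulVec {M : Matrix ι ι ℝ} {c : ℝ} {x : ι → ℝ}
    (h : c * norm2 x ^ 2 ≤ x ⬝ᵥ M *ᵥ x) : c * norm2 x ≤ norm2 (M *ᵥ x) := by
  rcases (norm2_nonneg x).eq_or_lt with hx | hx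
  · simp [← hx, norm2_nonneg]
  refine le_of_mul_le_mul_right ?_ hx
  calc c * norm2 x * norm2 x = c * norm2 x ^ 2 := by ring
    _ ≤ x ⬝ᵥ M *ᵥ x := h
    _ ≤ norm2 (M *ᵥ x) * norm2 x := by
        rw [mul_comm]; exact dotProduct_le_norm2_mul_norm2 x (M *ᵥ x)

lemma mul_norm2_inv_mulVec_le [DecidableEq ι] {M : Matrix ι ι ℝ} (hM : IsUnit M) {c : ℝ}
    (h : ∀ x, c * norm2 x ^ 2 ≤ x ⬝ᵥ M *ᵥ x) (u : ι → ℝ) : c * norm2 (M⁻¹ *ᵥ u) ≤ norm2 u := by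
  simpa only [mulVec_mulVec, mul_nonsing_inv _ ((isUnit_iff_isUnit_det M).mp hM), one_mulVec]
    using mul_norm2_le_norm2_mulVec (h (M⁻¹ *ᵥ u))

lemma posDef_of_mul_sq_norm2_le {M : Matrix ι ι ℝ} (hM : M.IsHermitian) {c : ℝ} (hc : 0 < c)
    (h : ∀ x, c * norm2 x ^ 2 ≤ x ⬝ᵥ M *ᵥ x) : M.PosDef := by
  refine .of_dotProduct_mulVec_pos hM fun x hx => ?_
  have hx2 : 0 < norm2 x ^ 2 := by
    rw [sq_norm2]; simpa only [star_trivial] using dotProduct_self_star_pos_iff.mpr hx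
  simpa only [star_trivial] using (mul_pos hc hx2).trans_le (h x)

lemma mul_sq_norm2_le_dotProduct_one_sub_transpose_mul_self_mulVec [DecidableEq κ]
    {P : Matrix ι κ ℝ} {c : ℝ} (hP : ∀ x, norm2 (P *ᵥ x) ≤ c * norm2 x) (x : κ → ℝ) :
    (1 - c ^ 2) * norm2 x ^ 2 ≤ x ⬝ᵥ (1 - Pᵀ * P) *ᵥ x := by
  rw [dotProduct_one_sub_transpose_mul_self_mulVec]
  nlinarith [hP x, norm2_nonneg (P *ᵥ x)]

end norm2

section colSel

variable {n : ℕ} (S : Finset (Fin n))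

lemma colSel_transpose_mulVec (a : Fin n → ℝ) : (colSel S)ᵀ *ᵥ a = fun j : S => a j := by
  ext j
  simp [colSel, mulVec, dotProduct]

lemma colSel_transpose_mul_self : (colSel S)ᵀ * colSel S = 1 := by
  ext i j
  rw [mul_apply, one_apply]
  simp only [transpose_apply, colSel, of_apply, ite_mul, one_mul, zero_mul, sum_ite_eq',
    mem_univ, if_true, Subtype.ext_iff]

lemma sparse_colSel_mulVec {s : ℕ} (hS : S.card ≤ s) (z : S → ℝ) :
    Sparse s (colSel S *ᵥ z) := by
  refine ⟨S, hS, fun i hi => ?_⟩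
  simp only [colSel, mulVec, dotProduct, of_apply, ite_mul, one_mul, zero_mul]
  exact sum_eq_zero fun j _ => if_neg fun e => hi (by rw [e]; exact j.2)

lemma sq_norm2_restrictVec_sdiff_add_colSel_mulVec (a : Fin n → ℝ) (z : S → ℝ) :
    norm2 (restrictVec (univ \ S) a + colSel S *ᵥ z) ^ 2 =
      norm2 (restrictVec (univ \ S) a) ^ 2 + norm2 z ^ 2 := by
  have horth : restrictVec (univ \ S) a ⬝ᵥ colSel S *ᵥ z = 0 := by
    rw [← dotProduct_transpose_mulVec, colSel_transpose_mulVec]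
    simp [restrictVec]
  rw [← norm2_mulVec_of_transpose_mul_self (colSel_transpose_mul_self S) z, sq_norm2, sq_norm2,
    sq_norm2, add_dotProduct, dotProduct_add, dotProduct_add, horth,
    dotProduct_comm (colSel S *ᵥ z), horth]
  ring

lemma norm2_restrictVec_le (a : Fin n → ℝ) : norm2 (restrictVec S a) ≤ norm2 a :=
  Real.sqrt_le_sqrt <| sum_le_sum fun i _ => by
    unfold restrictVec; split_ifs <;> simp [sq_nonneg]

end colSel

namespace PABound

variable {n m s : ℕ} {Q : Matrix (Fin n) (Fin m) ℝ} {δ : ℝ}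

lemma mono {δ' : ℝ} (hPA : PABound Q s δ) (hδ : δ ≤ δ') : PABound Q s δ' := fun w v hv =>
  (hPA w v hv).trans <|
    mul_le_mul_of_nonneg_right (mul_le_mul_of_nonneg_right hδ (norm2_nonneg _)) (norm2_nonneg _)

variable (hQ : Qᵀ * Q = 1) (hPA : PABound Q s δ) (hδ : 0 ≤ δ)
include hQ hPA hδ

lemma norm2_transpose_mulVec_le_of_sparse {y : Fin n → ℝ} (hy : Sparse s y) :
    norm2 (Qᵀ *ᵥ y) ≤ δ * norm2 y := by
  refine le_of_sq_le_mul (mul_nonneg hδ (norm2_nonneg y)) ?_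
  calc norm2 (Qᵀ *ᵥ y) ^ 2 = Q *ᵥ (Qᵀ *ᵥ y) ⬝ᵥ y := by
        rw [sq_norm2, dotProduct_transpose_mulVec, dotProduct_comm]
    _ ≤ δ * norm2 (Q *ᵥ (Qᵀ *ᵥ y)) * norm2 y := (le_abs_self _).trans (hPA _ y hy)
    _ = δ * norm2 y * norm2 (Qᵀ *ᵥ y) := by
        rw [norm2_mulVec_of_transpose_mul_self hQ]; ring

lemma norm2_colSel_transpose_mulVec_le {S : Finset (Fin n)} (hS : S.card ≤ s)
    (w : Fin m → ℝ) : norm2 ((colSel S)ᵀ *ᵥ (Q *ᵥ w)) ≤ δ * norm2 w := by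
  set u := (colSel S)ᵀ *ᵥ (Q *ᵥ w)
  refine le_of_sq_le_mul (mul_nonneg hδ (norm2_nonneg w)) ?_
  calc norm2 u ^ 2 = Q *ᵥ w ⬝ᵥ colSel S *ᵥ u := by
        rw [sq_norm2, dotProduct_transpose_mulVec, dotProduct_comm]
    _ ≤ δ * norm2 (Q *ᵥ w) * norm2 (colSel S *ᵥ u) :=
        (le_abs_self _).trans (hPA _ _ (sparse_colSel_mulVec S hS u))
    _ = δ * norm2 w * norm2 u := by
        rw [norm2_mulVec_of_transpose_mul_self hQ,
          norm2_mulVec_of_transpose_mul_self (colSel_transpose_mul_self S)]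

lemma norm2_transpose_mul_colSel_mulVec_le {S : Finset (Fin n)} (hS : S.card ≤ s) (x : S → ℝ) :
    norm2 ((Qᵀ * colSel S) *ᵥ x) ≤ δ * norm2 x := by
  simpa only [← mulVec_mulVec, norm2_mulVec_of_transpose_mul_self (colSel_transpose_mul_self S)]
    using norm2_transpose_mulVec_le_of_sparse hQ hPA hδ (sparse_colSel_mulVec S hS x)

end PABound

theorem stmt16_general {n m s : ℕ} (Q : Matrix (Fin n) (Fin m) ℝ) (hQ : Qᵀ * Q = 1)
    (δ : ℝ) (hPA : PABound Q s δ) (hδ2 : δ ^ 2 < 1 / 2)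
    (η : Fin n → ℝ) (ε₀ : ℝ) (hη : norm2 η ≤ ε₀)
    (Sk : Finset (Fin n)) (hcard : Sk.card ≤ s)
    (Mk : Matrix {i // i ∈ Sk} {i // i ∈ Sk} ℝ)
    (hMk : Mk = 1 - (colSel Sk)ᵀ * Q * Qᵀ * colSel Sk)
    (ηk : Fin n → ℝ)
    (hηk : ηk = restrictVec (Finset.univ \ Sk) η +
      (colSel Sk).mulVec ((Mk⁻¹).mulVec
        ((colSel Sk)ᵀ.mulVec (Q.mulVec (Qᵀ.mulVec (restrictVec (Finset.univ \ Sk) η)))))) :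
    IsUnit Mk ∧ norm2 ηk ^ 2 ≤ 3 * ε₀ ^ 2 := by
  set P := Qᵀ * colSel Sk
  have hMkP : Mk = 1 - Pᵀ * P := by
    simp only [hMk, P, transpose_mul, transpose_transpose, Matrix.mul_assoc]
  have hPA' := hPA.mono (le_abs_self δ)
  have hcoer : ∀ x, (1 - δ ^ 2) * norm2 x ^ 2 ≤ x ⬝ᵥ Mk *ᵥ x := by
    simpa only [hMkP, sq_abs] using mul_sq_norm2_le_dotProduct_one_sub_transpose_mul_self_mulVec
      (hPA'.norm2_transpose_mul_colSel_mulVec_le hQ (abs_nonneg δ) hcard)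
  have hunit : IsUnit Mk := (posDef_of_mul_sq_norm2_le
    (hMkP ▸ isHermitian_one_sub_transpose_mul_self P) (by linarith) hcoer).isUnit
  refine ⟨hunit, ?_⟩
  set f := restrictVec (univ \ Sk) η
  set u := (colSel Sk)ᵀ *ᵥ (Q *ᵥ (Qᵀ *ᵥ f))
  have hu : norm2 u ≤ |δ| * norm2 f :=
    (hPA'.norm2_colSel_transpose_mulVec_le hQ (abs_nonneg δ) hcard _).trans
      (mul_le_mul_of_nonneg_left (norm2_transpose_mulVec_le hQ f) (abs_nonneg δ))
  have hz : norm2 (Mk⁻¹ *ᵥ u) ≤ 2 * |δ| * norm2 f := by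
    nlinarith [mul_norm2_inv_mulVec_le hunit hcoer u, norm2_nonneg (Mk⁻¹ *ᵥ u)]
  have hf : norm2 f ≤ ε₀ := (norm2_restrictVec_le _ η).trans hη
  rw [hηk, sq_norm2_restrictVec_sdiff_add_colSel_mulVec]
  calc norm2 f ^ 2 + norm2 (Mk⁻¹ *ᵥ u) ^ 2 ≤ norm2 f ^ 2 + (2 * |δ| * norm2 f) ^ 2 := by
        gcongr; exact norm2_nonneg _
    _ = (1 + 4 * δ ^ 2) * norm2 f ^ 2 := by rw [mul_pow, mul_pow, sq_abs]; ring
    _ ≤ 3 * ε₀ ^ 2 := by nlinarith [norm2_nonneg f, sq_nonneg (norm2 f)]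

/-- Bound on the modified inlier-noise vector: if `δ² < 1/2` and `‖η‖₂ ≤ ε₀`, then for any
nonempty `S_k` with `|S_k| ≤ s` the matrix `M_k = I_k − I_{S_k}ᵀ Q Qᵀ I_{S_k}` is
invertible and `η_k = F_{J∖S_k}(η) + I_{S_k} M_k⁻¹ I_{S_k}ᵀ Q Qᵀ F_{J∖S_k}(η)` satisfies
`‖η_k‖₂² ≤ 3 ε₀²`. -/
theorem stmt16 {n m s : ℕ} (Q : Matrix (Fin n) (Fin m) ℝ) (hQ : Qᵀ * Q = 1)
    (δ : ℝ) (hδ0 : 0 ≤ δ) (hδ1 : δ ≤ 1) (hPA : PABound Q s δ) (hδ2 : δ ^ 2 < 1 / 2)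
    (η : Fin n → ℝ) (ε₀ : ℝ) (hη : norm2 η ≤ ε₀)
    (Sk : Finset (Fin n)) (hSkne : Sk.Nonempty) (hcard : Sk.card ≤ s)
    (Mk : Matrix {i // i ∈ Sk} {i // i ∈ Sk} ℝ)
    (hMk : Mk = 1 - (colSel Sk)ᵀ * Q * Qᵀ * colSel Sk)
    (ηk : Fin n → ℝ)
    (hηk : ηk = restrictVec (Finset.univ \ Sk) η +
      (colSel Sk).mulVec ((Mk⁻¹).mulVec
        ((colSel Sk)ᵀ.mulVec (Q.mulVec (Qᵀ.mulVec (restrictVec (Finset.univ \ Sk) η)))))) :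
    IsUnit Mk ∧ norm2 ηk ^ 2 ≤ 3 * ε₀ ^ 2 :=
  stmt16_general Q hQ δ hPA hδ2 η ε₀ hη Sk hcard Mk hMk ηk hηk
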